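/- arXiv:2512.03243 — 2 statements merged into one kernel-verified Lean document; each statement's English description precedes it below -/
import Mathlib

section
/- Let Z be an integrable real-valued random variable on a probability space, and let α ∈ [0,1). Assume P(Z = VaR_α(Z)) = 0. Then CVaR_α(Z) = inf_{η ∈ ℝ} { η + E[(Z−η)⁺]/(1−α) }, and the infimum is attained at η = VaR_α(Z), i.e. CVaR_α(Z) = VaR_α(Z) + E[(Z−VaR_α(Z))⁺]/(1−α). -/
open MeasureTheory Set

/-!
Because `P(Z = VaR) = 0`, the quantile property of `VaR` (right-continuity of `r ↦ P(Z ≤ r)` on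
one side, left limits on the other) forces `P(Z < VaR) = α`, so the tail event `A = {VaR ≤ Z}` has
probability `1 - α`. For every `η`, `E[(Z - η)⁺] ≥ ∫_A (Z - η) = ∫_A Z - η (1 - α)`, which after
dividing by `1 - α` reads `η + E[(Z - η)⁺] / (1 - α) ≥ CVaR`; for `η = VaR` the positive part
vanishes exactly off `A`, so equality holds there.
-/

section Quantile

variable {Ω : Type*} [MeasurableSpace Ω] {μ : Measure Ω} {Z : Ω → ℝ} {a : ENNReal} {q : ℝ}

theorem le_measure_le_of_forall_gt [IsFiniteMeasure μ] (hZ : Measurable Z)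
    (h : ∀ r > q, a ≤ μ {ω | Z ω ≤ r}) : a ≤ μ {ω | Z ω ≤ q} := by
  obtain ⟨u, hu_anti, hu_gt, hu_lim⟩ := exists_seq_strictAnti_tendsto q
  have hinter : {ω | Z ω ≤ q} = ⋂ n, {ω | Z ω ≤ u n} := by
    ext ω
    simp only [mem_ofPred_eq, mem_iInter]
    refine ⟨fun hω n ↦ hω.trans (hu_gt n).le, fun hω ↦ ge_of_tendsto' hu_lim hω⟩
  have hanti : Antitone fun n ↦ {ω | Z ω ≤ u n} :=
    fun m n hmn ω hω ↦ le_trans hω (hu_anti.antitone hmn)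
  rw [hinter, hanti.measure_iInter (fun n ↦ (measurableSet_le hZ measurable_const).nullMeasurableSet)
    ⟨0, measure_ne_top _ _⟩]
  exact le_iInf fun n ↦ h _ (hu_gt n)

theorem measure_lt_le_of_forall_lt (h : ∀ r < q, μ {ω | Z ω ≤ r} ≤ a) :
    μ {ω | Z ω < q} ≤ a := by
  obtain ⟨u, hu_mono, hu_lt, hu_lim⟩ := exists_seq_strictMono_tendsto q
  have hunion : {ω | Z ω < q} = ⋃ n, {ω | Z ω ≤ u n} := by
    ext ω
    simp only [mem_ofPred_eq, mem_iUnion]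
    refine ⟨fun hω ↦ ?_, fun ⟨n, hn⟩ ↦ hn.trans_lt (hu_lt n)⟩
    exact ((hu_lim.eventually (lt_mem_nhds hω)).exists).imp fun _ ↦ le_of_lt
  have hmono : Monotone fun n ↦ {ω | Z ω ≤ u n} :=
    fun m n hmn ω hω ↦ le_trans hω (hu_mono.monotone hmn)
  rw [hunion, hmono.measure_iUnion]
  exact iSup_le fun n ↦ h _ (hu_lt n)

theorem measure_lt_eq_of_isGLB [IsFiniteMeasure μ] (hZ : Measurable Z)
    (hq : IsGLB {r | a ≤ μ {ω | Z ω ≤ r}} q) (hatom : μ {ω | Z ω = q} = 0) :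
    μ {ω | Z ω < q} = a := by
  refine le_antisymm (measure_lt_le_of_forall_lt fun r hr ↦ ?_) ?_
  · exact (not_le.mp fun hle ↦ (hq.1 hle).not_gt hr).le
  calc a ≤ μ {ω | Z ω ≤ q} := le_measure_le_of_forall_gt hZ fun r hr ↦
        let ⟨s, hs, _, hsr⟩ := hq.exists_between hr
        hs.trans (measure_mono fun ω hω ↦ le_trans hω hsr.le)
    _ ≤ μ ({ω | Z ω < q} ∪ {ω | Z ω = q}) := measure_mono fun ω (hω : Z ω ≤ q) ↦ hω.lt_or_eq
    _ ≤ μ {ω | Z ω < q} + μ {ω | Z ω = q} := measure_union_le _ _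
    _ = μ {ω | Z ω < q} := by rw [hatom, add_zero]

end Quantile

section RockafellarUryasev

variable {Ω : Type*} [MeasurableSpace Ω] {μ : Measure Ω} {Z : Ω → ℝ}

theorem setIntegral_le_integral_max_zero {f : Ω → ℝ} (hf : Integrable f μ) (s : Set Ω) :
    ∫ ω in s, f ω ∂μ ≤ ∫ ω, max (f ω) 0 ∂μ :=
  calc ∫ ω in s, f ω ∂μ ≤ ∫ ω in s, max (f ω) 0 ∂μ :=
        setIntegral_mono hf.integrableOn hf.pos_part.integrableOn fun _ ↦ le_max_left _ _
    _ ≤ ∫ ω, max (f ω) 0 ∂μ :=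
        setIntegral_le_integral hf.pos_part (ae_of_all _ fun _ ↦ le_max_right _ _)

theorem integral_max_sub_zero_eq_setIntegral (hZm : Measurable Z) (c : ℝ) :
    ∫ ω, max (Z ω - c) 0 ∂μ = ∫ ω in {ω | c ≤ Z ω}, (Z ω - c) ∂μ := by
  rw [← integral_indicator (measurableSet_le measurable_const hZm)]
  congr 1 with ω
  by_cases h : c ≤ Z ω
  · simp [h]
  · simp [h, (not_le.mp h).le]

variable [IsFiniteMeasure μ]

theorem setIntegral_sub_const (hZ : Integrable Z μ) (s : Set Ω) (c : ℝ) :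
    ∫ ω in s, (Z ω - c) ∂μ = ∫ ω in s, Z ω ∂μ - c * μ.real s := by
  rw [integral_sub hZ.integrableOn (integrable_const c), setIntegral_const, smul_eq_mul, mul_comm]

theorem setIntegral_div_le_add_integral_max_sub_div (hZ : Integrable Z μ) {s : Set Ω}
    (hs : 0 < μ.real s) (η : ℝ) :
    (∫ ω in s, Z ω ∂μ) / μ.real s ≤ η + (∫ ω, max (Z ω - η) 0 ∂μ) / μ.real s := by
  have h := setIntegral_le_integral_max_zero (f := fun ω ↦ Z ω - η) (hZ.sub (integrable_const η)) s
  rw [setIntegral_sub_const hZ] at h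
  rw [div_le_iff₀ hs, add_mul, div_mul_cancel₀ _ hs.ne']
  linarith

theorem setIntegral_div_eq_add_integral_max_sub_div (hZ : Integrable Z μ) (hZm : Measurable Z)
    {q : ℝ} (hq : μ.real {ω | q ≤ Z ω} ≠ 0) :
    (∫ ω in {ω | q ≤ Z ω}, Z ω ∂μ) / μ.real {ω | q ≤ Z ω} =
      q + (∫ ω, max (Z ω - q) 0 ∂μ) / μ.real {ω | q ≤ Z ω} := by
  rw [integral_max_sub_zero_eq_setIntegral hZm, setIntegral_sub_const hZ]
  field_simp
  ring

theorem isLeast_add_integral_max_sub_div (hZ : Integrable Z μ) (hZm : Measurable Z)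
    {q : ℝ} (hq : 0 < μ.real {ω | q ≤ Z ω}) :
    IsLeast (range fun η ↦ η + (∫ ω, max (Z ω - η) 0 ∂μ) / μ.real {ω | q ≤ Z ω})
      ((∫ ω in {ω | q ≤ Z ω}, Z ω ∂μ) / μ.real {ω | q ≤ Z ω}) :=
  ⟨⟨q, (setIntegral_div_eq_add_integral_max_sub_div hZ hZm hq.ne').symm⟩,
    forall_mem_range.2 (setIntegral_div_le_add_integral_max_sub_div hZ hq)⟩

end RockafellarUryasev

/-- **Rockafellar–Uryasev variational formula for CVaR.**
`VaR` is the `α`-quantile (infimum of `r` with `P(Z ≤ r) ≥ α`), and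
`CVaR = E[Z | Z ≥ VaR]`.  Under the no-atom condition `P(Z = VaR) = 0`,
`CVaR` equals the infimum over `η ∈ ℝ` of `η + E[(Z - η)⁺]/(1 - α)`,
and the infimum is attained at `η = VaR`. -/
theorem cvar_variational {Ω : Type*} [MeasurableSpace Ω] (P : Measure Ω)
    [IsProbabilityMeasure P]
    (Z : Ω → ℝ) (hZmeas : Measurable Z) (hZint : Integrable Z P)
    (α : ℝ) (hα0 : 0 ≤ α) (hα1 : α < 1)
    (VaR : ℝ)
    (hVaR : IsGLB {r : ℝ | ENNReal.ofReal α ≤ P {ω | Z ω ≤ r}} VaR)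
    (hatom : P {ω | Z ω = VaR} = 0)
    (CVaR : ℝ)
    (hCVaR : CVaR = (∫ ω in {ω | VaR ≤ Z ω}, Z ω ∂P) / (P {ω | VaR ≤ Z ω}).toReal) :
    CVaR = (⨅ η : ℝ, (η + (∫ ω, max (Z ω - η) 0 ∂P) / (1 - α))) ∧
      CVaR = VaR + (∫ ω, max (Z ω - VaR) 0 ∂P) / (1 - α) := by
  have hA : P.real {ω | VaR ≤ Z ω} = 1 - α := by
    have hcompl : {ω | VaR ≤ Z ω} = {ω | Z ω < VaR}ᶜ := by ext; simp
    rw [hcompl, probReal_compl_eq_one_sub (measurableSet_lt hZmeas measurable_const),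
      measureReal_def, measure_lt_eq_of_isGLB hZmeas hVaR hatom, ENNReal.toReal_ofReal hα0]
  have hpos : 0 < P.real {ω | VaR ≤ Z ω} := hA ▸ sub_pos.2 hα1
  rw [← measureReal_def] at hCVaR
  constructor
  · rw [hCVaR, ← (isLeast_add_integral_max_sub_div hZint hZmeas hpos).isGLB.ciInf_eq, hA]
  · rw [hCVaR, setIntegral_div_eq_add_integral_max_sub_div hZint hZmeas hpos.ne', hA]
end

section
/- Let (X,d) be a complete separable metric space, p ∈ (0,1], and let a : [0,∞) → [0,∞) be a continuous, strictly increasing function with a(0) = 0. Let μ be a Borel probability measure on X with finite first moment satisfying the (a,c)-transportation-cost inequality: a(W_c(μ,ν')) ≤ H(ν'|μ) for every Borel probability measure ν' ≪ μ. Then for every Borel probability measure ν on X with finite first moment, every f ∈ C^p, and every t ≥ 0 such that H(ν|μ) ≤ a(t), one has ∫ f dν ≤ t + ∫ f dμ. -/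
/-!
For every coupling `π` of `μ` and `ν`, `∫ f dν - ∫ f dμ = ∫ (f y - f x) dπ ≤ ∫ d(x,y)^p dπ` (the
first moments make everything integrable, since `d^p ≤ 1 + d`), so `∫ f dν - ∫ f dμ ≤ W_c(μ, ν)`.
Finite entropy forces `ν ≪ μ`, and the transportation-cost inequality then gives
`a (W_c(μ, ν)) ≤ H(ν|μ) ≤ a t`, hence `W_c(μ, ν) ≤ t` because `a` is strictly increasing.
-/

open MeasureTheory Filter Topology
open scoped ENNReal Classical

/-- `π` is a coupling of `μ` and `ν`: its marginals are `μ` and `ν`. -/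
def IsCoupling {X : Type*} [MeasurableSpace X]
    (π : Measure (X × X)) (μ ν : Measure X) : Prop :=
  π.map Prod.fst = μ ∧ π.map Prod.snd = ν

/-- The transportation cost between `μ` and `ν` for the cost `c(x,y) = d(x,y)^p`. -/
noncomputable def Wc {X : Type*} [MetricSpace X] [MeasurableSpace X]
    (p : ℝ) (μ ν : Measure X) : ℝ :=
  sInf {c : ℝ | ∃ π : Measure (X × X), IsCoupling π μ ν ∧
    c = ∫ q : X × X, dist q.1 q.2 ^ p ∂π}

/-- The relative entropy `H(ν | μ) = ∫ log (dν/dμ) dν` if `ν ≪ μ` (and the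
integral exists), and `+∞` otherwise. -/

noncomputable def relEntropy {X : Type*} [MeasurableSpace X] (ν μ : Measure X) : ℝ≥0∞ :=
  if ν ≪ μ ∧ Integrable (fun x => Real.log (ν.rnDeriv μ x).toReal) ν
  then ENNReal.ofReal (∫ x, Real.log (ν.rnDeriv μ x).toReal ∂ν)
  else ⊤

lemma Real.rpow_le_one_add_self {p d : ℝ} (hp0 : 0 ≤ p) (hp1 : p ≤ 1) (hd : 0 ≤ d) :
    d ^ p ≤ 1 + d := by
  rcases le_or_gt d 1 with h | h
  · linarith [Real.rpow_le_one hd h hp0]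
  · linarith [Real.rpow_le_self_of_one_le h.le hp1]

section PseudoMetric

variable {X : Type*} [PseudoMetricSpace X] {f : X → ℝ} {p : ℝ}

lemma continuous_of_abs_sub_le_dist_rpow (hp : 0 < p)
    (hf : ∀ x y, |f x - f y| ≤ dist x y ^ p) : Continuous f := by
  refine continuous_iff_continuousAt.2 fun x => tendsto_iff_dist_tendsto_zero.2 ?_
  have hdist : Tendsto (fun y => dist y x ^ p) (𝓝 x) (𝓝 0) := by
    simpa [Real.zero_rpow hp.ne'] using
      ((continuous_id.dist (continuous_const (y := x))).tendsto x).rpow_const (Or.inr hp.le)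
  exact squeeze_zero (fun _ => dist_nonneg) (fun y => hf y x) hdist

variable [MeasurableSpace X] {m : Measure X} [IsFiniteMeasure m]

lemma integrable_dist_of_integrable_dist [OpensMeasurableSpace X] {x₀ x₁ : X}
    (h : Integrable (fun x => dist x x₁) m) : Integrable (fun x => dist x x₀) m :=
  (h.add (integrable_const (dist x₁ x₀))).mono'
    (continuous_id.dist continuous_const).aestronglyMeasurable
    (Eventually.of_forall fun x => by
      simpa [abs_of_nonneg dist_nonneg] using dist_triangle x x₁ x₀)

lemma integrable_of_abs_sub_le_dist_rpow {x₀ : X} (hp0 : 0 ≤ p) (hp1 : p ≤ 1)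
    (hf : ∀ x y, |f x - f y| ≤ dist x y ^ p) (hfm : AEStronglyMeasurable f m)
    (hm : Integrable (fun x => dist x x₀) m) : Integrable f m := by
  refine ((integrable_const (|f x₀| + 1)).add hm).mono' hfm (Eventually.of_forall fun x => ?_)
  have hpow := Real.rpow_le_one_add_self hp0 hp1 (dist_nonneg (x := x) (y := x₀))
  rw [Real.norm_eq_abs, Pi.add_apply]
  linarith [hf x x₀, abs_sub_abs_le_abs_sub (f x) (f x₀)]

end PseudoMetric

namespace IsCoupling

variable {X : Type*} [MeasurableSpace X] {π : Measure (X × X)} {μ ν : Measure X}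

lemma isProbabilityMeasure [IsProbabilityMeasure μ] (hπ : IsCoupling π μ ν) :
    IsProbabilityMeasure π := by
  have : IsProbabilityMeasure (π.map Prod.fst) := hπ.1 ▸ ‹_›
  exact Measure.isProbabilityMeasure_of_map Prod.fst

lemma integral_sub_integral_le {f : X → ℝ} {c : X × X → ℝ} (hπ : IsCoupling π μ ν)
    (hfμ : Integrable f μ) (hfν : Integrable f ν) (hc : Integrable c π)
    (hfc : ∀ q, f q.2 - f q.1 ≤ c q) : ∫ x, f x ∂ν - ∫ x, f x ∂μ ≤ ∫ q, c q ∂π := by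
  obtain ⟨rfl, rfl⟩ := hπ
  have hf₂ : Integrable (fun q : X × X => f q.2) π := hfν.comp_measurable measurable_snd
  have hf₁ : Integrable (fun q : X × X => f q.1) π := hfμ.comp_measurable measurable_fst
  rw [integral_map measurable_snd.aemeasurable hfν.aestronglyMeasurable,
    integral_map measurable_fst.aemeasurable hfμ.aestronglyMeasurable, ← integral_sub hf₂ hf₁]
  exact integral_mono (hf₂.sub hf₁) hc hfc

end IsCoupling

lemma isCoupling_prod {X : Type*} [MeasurableSpace X] (μ ν : Measure X)
    [IsProbabilityMeasure μ] [IsProbabilityMeasure ν] : IsCoupling (μ.prod ν) μ ν :=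
  ⟨by simp, by simp⟩

section Metric

variable {X : Type*} [MetricSpace X] [MeasurableSpace X] {μ ν : Measure X} {p : ℝ}

lemma Wc_nonneg (p : ℝ) (μ ν : Measure X) : 0 ≤ Wc p μ ν :=
  Real.sInf_nonneg <| by
    rintro _ ⟨π, -, rfl⟩
    exact integral_nonneg fun q => Real.rpow_nonneg dist_nonneg _

lemma le_Wc [IsProbabilityMeasure μ] [IsProbabilityMeasure ν] {b : ℝ}
    (h : ∀ π, IsCoupling π μ ν → b ≤ ∫ q, dist q.1 q.2 ^ p ∂π) : b ≤ Wc p μ ν :=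
  le_csInf ⟨_, μ.prod ν, isCoupling_prod μ ν, rfl⟩ <| by
    rintro _ ⟨π, hπ, rfl⟩
    exact h π hπ

variable [SecondCountableTopology X] [OpensMeasurableSpace X]

lemma IsCoupling.integrable_dist_rpow [IsProbabilityMeasure μ] {π : Measure (X × X)} {x₀ : X}
    (hp0 : 0 ≤ p) (hp1 : p ≤ 1) (hπ : IsCoupling π μ ν)
    (hμ : Integrable (fun x => dist x x₀) μ) (hν : Integrable (fun x => dist x x₀) ν) :
    Integrable (fun q : X × X => dist q.1 q.2 ^ p) π := by
  have := hπ.isProbabilityMeasure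
  obtain ⟨rfl, rfl⟩ := hπ
  refine ((integrable_const 1).add ((hμ.comp_measurable measurable_fst).add
    (hν.comp_measurable measurable_snd))).mono'
    (measurable_dist.pow_const p).aestronglyMeasurable (Eventually.of_forall fun q => ?_)
  rw [Real.norm_eq_abs, abs_of_nonneg (Real.rpow_nonneg dist_nonneg _)]
  have hpow := Real.rpow_le_one_add_self hp0 hp1 (dist_nonneg (x := q.1) (y := q.2))
  have htri := dist_triangle_right q.1 q.2 x₀
  simp only [Pi.add_apply, Function.comp_apply]
  linarith

lemma integral_sub_integral_le_Wc [IsProbabilityMeasure μ] [IsProbabilityMeasure ν]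
    {f : X → ℝ} {x₀ : X} (hp0 : 0 < p) (hp1 : p ≤ 1) (hf : ∀ x y, |f x - f y| ≤ dist x y ^ p)
    (hμ : Integrable (fun x => dist x x₀) μ) (hν : Integrable (fun x => dist x x₀) ν) :
    ∫ x, f x ∂ν - ∫ x, f x ∂μ ≤ Wc p μ ν := by
  have hfc := continuous_of_abs_sub_le_dist_rpow hp0 hf
  refine le_Wc fun π hπ => hπ.integral_sub_integral_le
    (integrable_of_abs_sub_le_dist_rpow hp0.le hp1 hf hfc.aestronglyMeasurable hμ)
    (integrable_of_abs_sub_le_dist_rpow hp0.le hp1 hf hfc.aestronglyMeasurable hν)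
    (hπ.integrable_dist_rpow hp0.le hp1 hμ hν) fun q => ?_
  rw [dist_comm]
  exact (le_abs_self _).trans (hf q.2 q.1)

end Metric

lemma absolutelyContinuous_of_relEntropy_ne_top {X : Type*} [MeasurableSpace X]
    {ν μ : Measure X} (h : relEntropy ν μ ≠ ⊤) : ν ≪ μ := by
  by_contra hac
  exact h (by rw [relEntropy, if_neg fun h' => hac h'.1])

theorem integral_le_of_TCI_general {X : Type*} [MetricSpace X]
    [TopologicalSpace.SeparableSpace X] [MeasurableSpace X] [BorelSpace X]
    (p : ℝ) (hp0 : 0 < p) (hp1 : p ≤ 1)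
    (a : ℝ → ℝ)
    (ha_mono : StrictMonoOn a (Set.Ici 0)) (ha0 : a 0 = 0)
    (μ : Measure X) [IsProbabilityMeasure μ]
    (hμ : ∃ x₀ : X, Integrable (fun x => dist x x₀) μ)
    (hTCI : ∀ ν' : Measure X, IsProbabilityMeasure ν' → ν' ≪ μ →
      ENNReal.ofReal (a (Wc p μ ν')) ≤ relEntropy ν' μ)
    (ν : Measure X) [IsProbabilityMeasure ν]
    (hν : ∃ x₀ : X, Integrable (fun x => dist x x₀) ν)
    (f : X → ℝ) (hf : ∀ x y, |f x - f y| ≤ dist x y ^ p)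
    (t : ℝ) (ht : 0 ≤ t) (hent : relEntropy ν μ ≤ ENNReal.ofReal (a t)) :
    (∫ x, f x ∂ν) ≤ t + ∫ x, f x ∂μ := by
  have := UniformSpace.secondCountable_of_separable X
  obtain ⟨x₀, hμ⟩ := hμ
  obtain ⟨x₁, hν⟩ := hν
  have hac : ν ≪ μ :=
    absolutelyContinuous_of_relEntropy_ne_top (ne_top_of_le_ne_top ENNReal.ofReal_ne_top hent)
  have hat : 0 ≤ a t := ha0 ▸ ha_mono.monotoneOn Set.self_mem_Ici ht ht
  have haW : a (Wc p μ ν) ≤ a t :=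
    (ENNReal.ofReal_le_ofReal_iff hat).1 ((hTCI ν inferInstance hac).trans hent)
  have hWt : Wc p μ ν ≤ t := (ha_mono.le_iff_le (Wc_nonneg p μ ν) ht).1 haW
  linarith [integral_sub_integral_le_Wc hp0 hp1 hf hμ (integrable_dist_of_integrable_dist hν)]

/-- Under the `(a, c)`-transportation-cost inequality for `μ` with cost
`c(x,y) = d(x,y)^p` and deviation function `a` (continuous, strictly increasing,
`a 0 = 0`), every probability measure `ν` with finite first moment, every
`f ∈ C^p` and every `t ≥ 0` with `H(ν|μ) ≤ a t` satisfy `∫ f dν ≤ t + ∫ f dμ`. -/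
theorem integral_le_of_TCI {X : Type*} [MetricSpace X] [CompleteSpace X]
    [TopologicalSpace.SeparableSpace X] [MeasurableSpace X] [BorelSpace X]
    (p : ℝ) (hp0 : 0 < p) (hp1 : p ≤ 1)
    (a : ℝ → ℝ) (ha_cont : ContinuousOn a (Set.Ici 0))
    (ha_mono : StrictMonoOn a (Set.Ici 0)) (ha0 : a 0 = 0)
    (μ : Measure X) [IsProbabilityMeasure μ]
    (hμ : ∃ x₀ : X, Integrable (fun x => dist x x₀) μ)
    (hTCI : ∀ ν' : Measure X, IsProbabilityMeasure ν' → ν' ≪ μ →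
      ENNReal.ofReal (a (Wc p μ ν')) ≤ relEntropy ν' μ)
    (ν : Measure X) [IsProbabilityMeasure ν]
    (hν : ∃ x₀ : X, Integrable (fun x => dist x x₀) ν)
    (f : X → ℝ) (hf : ∀ x y, |f x - f y| ≤ dist x y ^ p)
    (t : ℝ) (ht : 0 ≤ t) (hent : relEntropy ν μ ≤ ENNReal.ofReal (a t)) :
    (∫ x, f x ∂ν) ≤ t + ∫ x, f x ∂μ :=
  integral_le_of_TCI_general p hp0 hp1 a ha_mono ha0 μ hμ hTCI ν hν f hf t ht hent
end
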